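/- arXiv:1603.04416 — 3 statements merged into one kernel-verified Lean document; each statement's English description precedes it below -/
import Mathlib

section
/- For every idealised conformity measure A and every significance level ε ∈ (0,1): E_{x,τ}[|Γ_A^ε(x,τ)|] = E_{(x,y),τ}[|Γ_A^ε(x,τ)\{y}|] + (1 − ε); equivalently, Prob_{(x,y),τ}(y ∈ Γ_A^ε(x,τ)) = 1 − ε. -/
noncomputable section Conformal

open Finset

variable {X Y : Type*} [Fintype X] [Fintype Y] [DecidableEq Y]

/-- The p-value `p_A(x,y,τ) = Q{z : A z < A (x,y)} + τ·Q{z : A z = A (x,y)}`. -/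
def pValue (Q A : X × Y → ℝ) (x : X) (y : Y) (τ : ℝ) : ℝ :=
  (∑ z : X × Y, if A z < A (x, y) then Q z else 0)
    + τ * ∑ z : X × Y, if A z = A (x, y) then Q z else 0

/-- The prediction set `Γ_A^ε(x,τ) = {y : p_A(x,y,τ) > ε}`. -/
def predSet (Q A : X × Y → ℝ) (ε : ℝ) (x : X) (τ : ℝ) : Finset Y :=
  Finset.univ.filter fun y => ε < pValue Q A x y τ

/-- The marginal `Q_X` of `Q` on the object space. -/
def margX (Q : X × Y → ℝ) (x : X) : ℝ := ∑ y, Q (x, y)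

/-- The marginal `Q_Y` of `Q` on the label space. -/
def margY (Q : X × Y → ℝ) (y : Y) : ℝ := ∑ x, Q (x, y)

/-- The conditional probability `Q(y|x)`; as a function of `z = (x,y)` this is the
CP idealised conformity measure. -/
def condQ (Q : X × Y → ℝ) (z : X × Y) : ℝ := Q z / margX Q z.1

/-- Expectation `E_{x,τ}` with `x ~ Q_X` and `τ` uniform on `[0,1]`, independent. -/
def expXT (Q : X × Y → ℝ) (g : X → ℝ → ℝ) : ℝ :=
  ∑ x, margX Q x * ∫ τ in (0:ℝ)..1, g x τ

/-- Expectation `E_{(x,y),τ}` with `(x,y) ~ Q` and `τ` uniform on `[0,1]`, independent. -/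
def expZT (Q : X × Y → ℝ) (g : X × Y → ℝ → ℝ) : ℝ :=
  ∑ z, Q z * ∫ τ in (0:ℝ)..1, g z τ

open Classical in
/-- Probability `Prob_{x,τ}` with `x ~ Q_X` and `τ` uniform on `[0,1]`, independent. -/
def probXT (Q : X × Y → ℝ) (P : X → ℝ → Prop) : ℝ :=
  expXT Q fun x τ => if P x τ then 1 else 0

open Classical in
/-- Probability `Prob_{(x,y),τ}` with `(x,y) ~ Q` and `τ` uniform on `[0,1]`, independent. -/
def probZT (Q : X × Y → ℝ) (P : X × Y → ℝ → Prop) : ℝ :=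
  expZT Q fun z τ => if P z τ then 1 else 0

/-- `A` is a refinement of `B`. -/
def Refines (A B : X × Y → ℝ) : Prop :=
  ∀ z1 z2 : X × Y, B z1 < B z2 → A z1 < A z2

/-- `max_{y' ≠ y} p_A(x,y',τ)`. -/
def maxOther (Q A : X × Y → ℝ) (x : X) (y : Y) (τ : ℝ) : ℝ :=
  ⨆ y' : {y' : Y // y' ≠ y}, pValue Q A x y'.1 τ

/-- The unconfidence `min_y max_{y' ≠ y} p_A(x,y',τ)`. -/
def unconf (Q A : X × Y → ℝ) (x : X) (τ : ℝ) : ℝ := ⨅ y : Y, maxOther Q A x y τ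

/-- The credibility `max_y p_A(x,y,τ)`. -/
def maxPV (Q A : X × Y → ℝ) (x : X) (τ : ℝ) : ℝ := ⨆ y : Y, pValue Q A x y τ

/-- The predictability `f(x) = max_y Q(y|x)`. -/
def predictability (Q : X × Y → ℝ) (x : X) : ℝ := ⨆ y : Y, condQ Q (x, y)

/-- `c` is a choice function: `Q(c x | x) = f(x)` for all `x`. -/
def IsChoiceFun (Q : X × Y → ℝ) (c : X → Y) : Prop :=
  ∀ x, condQ Q (x, c x) = predictability Q x

/-- The signed predictability (SP) idealised conformity measure corresponding to `c`. -/
def SPMeasure (Q : X × Y → ℝ) (c : X → Y) : X × Y → ℝ := fun z =>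
  if z.2 = c z.1 then predictability Q z.1 else -predictability Q z.1

/-- The modified conditional probability (MCP) idealised conformity measure
corresponding to `c`. -/
def MCPMeasure (Q : X × Y → ℝ) (c : X → Y) : X × Y → ℝ := fun z =>
  if z.2 = c z.1 then condQ Q z else condQ Q z - 1

/-- The modified signed predictability (MSP) idealised conformity measure
(independent of the choice function: `y = ŷ(x)` iff `Q(y|x) = f(x)` when `f(x) > 1/2`). -/
def MSPMeasure (Q : X × Y → ℝ) : X × Y → ℝ := fun z =>
  if 1 / 2 < predictability Q z.1 then
    if condQ Q z = predictability Q z.1 then predictability Q z.1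
    else -predictability Q z.1
  else 0

/-- S-optimality. -/
def SOpt (Q A : X × Y → ℝ) : Prop :=
  ∀ B : X × Y → ℝ,
    expXT Q (fun x τ => ∑ y, pValue Q A x y τ)
      ≤ expXT Q (fun x τ => ∑ y, pValue Q B x y τ)

/-- N-optimality. -/
def NOpt (Q A : X × Y → ℝ) : Prop :=
  ∀ B : X × Y → ℝ, ∀ ε ∈ Set.Ioo (0:ℝ) 1,
    expXT Q (fun x τ => ((predSet Q A ε x τ).card : ℝ))
      ≤ expXT Q (fun x τ => ((predSet Q B ε x τ).card : ℝ))

/-- OF-optimality. -/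
def OFOpt (Q A : X × Y → ℝ) : Prop :=
  ∀ B : X × Y → ℝ,
    expZT Q (fun z τ => ∑ y' ∈ Finset.univ.erase z.2, pValue Q A z.1 y' τ)
      ≤ expZT Q (fun z τ => ∑ y' ∈ Finset.univ.erase z.2, pValue Q B z.1 y' τ)

/-- OE-optimality. -/
def OEOpt (Q A : X × Y → ℝ) : Prop :=
  ∀ B : X × Y → ℝ, ∀ ε ∈ Set.Ioo (0:ℝ) 1,
    expZT Q (fun z τ => (((predSet Q A ε z.1 τ).erase z.2).card : ℝ))
      ≤ expZT Q (fun z τ => (((predSet Q B ε z.1 τ).erase z.2).card : ℝ))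

/-- U-optimality. -/
def UOpt (Q A : X × Y → ℝ) : Prop :=
  ∀ B : X × Y → ℝ,
    expXT Q (unconf Q A) < expXT Q (unconf Q B) ∨
      (expXT Q (unconf Q A) = expXT Q (unconf Q B) ∧
        expXT Q (maxPV Q A) ≤ expXT Q (maxPV Q B))

/-- M-optimality. -/
def MOpt (Q A : X × Y → ℝ) : Prop :=
  ∀ B : X × Y → ℝ, ∀ ε ∈ Set.Ioo (0:ℝ) 1,
    probXT Q (fun x τ => 1 < (predSet Q A ε x τ).card)
        < probXT Q (fun x τ => 1 < (predSet Q B ε x τ).card) ∨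
      (probXT Q (fun x τ => 1 < (predSet Q A ε x τ).card)
          = probXT Q (fun x τ => 1 < (predSet Q B ε x τ).card) ∧
        probXT Q (fun x τ => (predSet Q B ε x τ).card = 0)
          ≤ probXT Q (fun x τ => (predSet Q A ε x τ).card = 0))

/-- F-optimality. -/
def FOpt (Q A : X × Y → ℝ) : Prop :=
  ∀ B : X × Y → ℝ,
    expXT Q (fun x τ => (∑ y, pValue Q A x y τ) - maxPV Q A x τ)
        < expXT Q (fun x τ => (∑ y, pValue Q B x y τ) - maxPV Q B x τ) ∨
      (expXT Q (fun x τ => (∑ y, pValue Q A x y τ) - maxPV Q A x τ)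
          = expXT Q (fun x τ => (∑ y, pValue Q B x y τ) - maxPV Q B x τ) ∧
        expXT Q (maxPV Q A) ≤ expXT Q (maxPV Q B))

/-- E-optimality. -/
def EOpt (Q A : X × Y → ℝ) : Prop :=
  ∀ B : X × Y → ℝ, ∀ ε ∈ Set.Ioo (0:ℝ) 1,
    expXT Q (fun x τ => max (((predSet Q A ε x τ).card : ℝ) - 1) 0)
        < expXT Q (fun x τ => max (((predSet Q B ε x τ).card : ℝ) - 1) 0) ∨
      (expXT Q (fun x τ => max (((predSet Q A ε x τ).card : ℝ) - 1) 0)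
          = expXT Q (fun x τ => max (((predSet Q B ε x τ).card : ℝ) - 1) 0) ∧
        probXT Q (fun x τ => (predSet Q B ε x τ).card = 0)
          ≤ probXT Q (fun x τ => (predSet Q A ε x τ).card = 0))

/-- OU-optimality. -/
def OUOpt (Q A : X × Y → ℝ) : Prop :=
  ∀ B : X × Y → ℝ,
    expZT Q (fun z τ => maxOther Q A z.1 z.2 τ)
      ≤ expZT Q (fun z τ => maxOther Q B z.1 z.2 τ)

/-- OM-optimality. -/
def OMOpt (Q A : X × Y → ℝ) : Prop :=
  ∀ B : X × Y → ℝ, ∀ ε ∈ Set.Ioo (0:ℝ) 1,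
    probZT Q (fun z τ => ((predSet Q A ε z.1 τ).erase z.2).Nonempty)
      ≤ probZT Q (fun z τ => ((predSet Q B ε z.1 τ).erase z.2).Nonempty)

end Conformal

/-!
For a fixed conformity level `a`, let `L` and `W` be the `Q`-masses of `{A < a}` and `{A = a}`.
The substitution `u = L + τ W` turns `W · ∫₀¹ g(L + τ W) dτ` into `∫_L^{L+W} g`, and as `a` runs
through the values of `A` in increasing order these intervals tile `[0, 1]`. Hence the randomised
p-value of `(x, y) ~ Q` is uniform on `[0, 1]`, so `y ∈ Γ^ε(x, τ)`, i.e. `p > ε`, has probability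
`1 - ε`; and `|Γ^ε| = |Γ^ε \ {y}| + 𝟙[y ∈ Γ^ε]`.
-/

open Finset MeasureTheory

theorem Finset.sum_telescope_filter_lt {α M G : Type*} [LinearOrder α] [AddCommMonoid M]
    [AddCommGroup G] (s : Finset α) (w : α → M) (F : M → G) :
    ∑ a ∈ s, (F (∑ b ∈ s with b < a, w b + w a) - F (∑ b ∈ s with b < a, w b))
      = F (∑ a ∈ s, w a) - F 0 := by
  classical
  induction s using Finset.induction_on_max with
  | empty => simp
  | insert a s hlt ih =>
    have ha : a ∉ s := fun h => lt_irrefl a (hlt a h)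
    have hbelow_a : {b ∈ insert a s | b < a} = s := by
      rw [filter_insert, if_neg (lt_irrefl a)]
      exact filter_true_of_mem hlt
    have hbelow : ∀ c ∈ s, {b ∈ insert a s | b < c} = {b ∈ s | b < c} := fun c hc => by
      rw [filter_insert, if_neg (not_lt.mpr (hlt c hc).le)]
    have hrest : ∑ c ∈ s, (F (∑ b ∈ insert a s with b < c, w b + w c)
        - F (∑ b ∈ insert a s with b < c, w b)) = F (∑ c ∈ s, w c) - F 0 := by
      rw [← ih]
      exact sum_congr rfl fun c hc => by rw [hbelow c hc]
    rw [sum_insert ha, sum_insert ha, hbelow_a, hrest, add_comm (w a)]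
    abel

theorem Finset.natCast_card_eq_card_erase_add_ite {α : Type*} [DecidableEq α] (s : Finset α)
    (a : α) : (#s : ℝ) = #(s.erase a) + if a ∈ s then 1 else 0 := by
  split_ifs with h
  · rw [← card_erase_add_one h]
    push_cast
    rfl
  · rw [erase_eq_of_notMem h, add_zero]

section StepFunction

variable (ε : ℝ)

theorem monotone_ite_lt_one_zero : Monotone fun u : ℝ => if ε < u then (1 : ℝ) else 0 := by
  intro u v huv
  dsimp only
  split_ifs <;> linarith

theorem intervalIntegrable_ite_lt_affine (L W a b : ℝ) :
    IntervalIntegrable (fun τ : ℝ => if ε < L + τ * W then (1 : ℝ) else 0) volume a b := by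
  rcases le_total 0 W with hW | hW
  · exact ((monotone_ite_lt_one_zero ε).comp fun s t _ => by nlinarith).intervalIntegrable
  · exact ((monotone_ite_lt_one_zero ε).comp_antitone fun s t _ => by nlinarith).intervalIntegrable

variable {ε}

theorem integral_ite_lt_one_zero (h0 : 0 ≤ ε) (h1 : ε ≤ 1) :
    ∫ u in (0 : ℝ)..1, (if ε < u then (1 : ℝ) else 0) = 1 - ε := by
  rw [← intervalIntegral.integral_add_adjacent_intervals (b := ε)
    (monotone_ite_lt_one_zero ε).intervalIntegrable (monotone_ite_lt_one_zero ε).intervalIntegrable]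
  have hbelow : ∫ u in (0 : ℝ)..ε, (if ε < u then (1 : ℝ) else 0) = ∫ _ in (0 : ℝ)..ε, 0 :=
    intervalIntegral.integral_congr_ae <| Filter.Eventually.of_forall fun u hu => by
      rw [Set.uIoc_of_le h0] at hu
      exact if_neg (not_lt.mpr hu.2)
  have habove : ∫ u in ε..1, (if ε < u then (1 : ℝ) else 0) = ∫ _ in ε..1, 1 :=
    intervalIntegral.integral_congr_ae <| Filter.Eventually.of_forall fun u hu => by
      rw [Set.uIoc_of_le h1] at hu
      exact if_pos hu.1
  simp [hbelow, habove]

end StepFunction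

section LevelMasses

variable {Z : Type*} [Fintype Z] (Q A : Z → ℝ)

noncomputable def massBelow (a : ℝ) : ℝ := ∑ z, if A z < a then Q z else 0

noncomputable def massAt (a : ℝ) : ℝ := ∑ z, if A z = a then Q z else 0

theorem sum_mul_comp_eq_sum_image_massAt_mul (h : ℝ → ℝ) :
    ∑ z, Q z * h (A z) = ∑ a ∈ univ.image A, massAt Q A a * h a := by
  rw [← sum_fiberwise_of_maps_to (fun z _ => mem_image_of_mem A (mem_univ z))]
  refine sum_congr rfl fun a _ => ?_
  rw [massAt, ← sum_filter, sum_mul]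
  exact sum_congr rfl fun z hz => by rw [(mem_filter.mp hz).2]

theorem sum_image_massAt : ∑ a ∈ univ.image A, massAt Q A a = ∑ z, Q z := by
  simpa using (sum_mul_comp_eq_sum_image_massAt_mul Q A fun _ => 1).symm

theorem massBelow_eq_sum_massAt (a : ℝ) :
    massBelow Q A a = ∑ b ∈ univ.image A with b < a, massAt Q A b := by
  simpa [massBelow, sum_filter, mul_ite] using
    sum_mul_comp_eq_sum_image_massAt_mul Q A fun b => if b < a then 1 else 0

theorem sum_mul_integral_comp_randomized_eq_integral {g : ℝ → ℝ}
    (hg : ∀ a b, IntervalIntegrable g volume a b) :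
    ∑ z, Q z * ∫ τ in (0 : ℝ)..1, g (massBelow Q A (A z) + τ * massAt Q A (A z))
      = ∫ u in (0 : ℝ)..∑ z, Q z, g u := by
  have hlevel : ∀ a, massAt Q A a * ∫ τ in (0 : ℝ)..1, g (massBelow Q A a + τ * massAt Q A a)
      = (∫ u in (0 : ℝ)..massBelow Q A a + massAt Q A a, g u)
        - ∫ u in (0 : ℝ)..massBelow Q A a, g u := by
    intro a
    rw [intervalIntegral.integral_interval_sub_left (hg _ _) (hg _ _)]
    simpa [add_comm, mul_comm] using intervalIntegral.mul_integral_comp_mul_add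
      (a := 0) (b := 1) (f := g) (massAt Q A a) (massBelow Q A a)
  rw [sum_mul_comp_eq_sum_image_massAt_mul Q A
      fun a => ∫ τ in (0 : ℝ)..1, g (massBelow Q A a + τ * massAt Q A a),
    sum_congr rfl fun a _ => hlevel a]
  simp only [massBelow_eq_sum_massAt Q A]
  rw [sum_telescope_filter_lt (univ.image A) (massAt Q A) fun t => ∫ u in (0 : ℝ)..t, g u,
    sum_image_massAt, intervalIntegral.integral_same, sub_zero]

end LevelMasses

section ConformalExpectation

variable {X Y : Type*} [Fintype X] [Fintype Y]

theorem expXT_eq_expZT (Q : X × Y → ℝ) (g : X → ℝ → ℝ) :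
    expXT Q g = expZT Q fun z => g z.1 := by
  simp only [expXT, expZT, margX, Fintype.sum_prod_type, sum_mul]

theorem expZT_add (Q : X × Y → ℝ) {f g : X × Y → ℝ → ℝ}
    (hf : ∀ z, IntervalIntegrable (f z) volume 0 1)
    (hg : ∀ z, IntervalIntegrable (g z) volume 0 1) :
    expZT Q (fun z τ => f z τ + g z τ) = expZT Q f + expZT Q g := by
  simp only [expZT, intervalIntegral.integral_add (hf _) (hg _), mul_add, sum_add_distrib]

theorem expZT_comp_pValue {Q : X × Y → ℝ} (hQ : ∑ z, Q z = 1) (A : X × Y → ℝ) {g : ℝ → ℝ}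
    (hg : ∀ a b, IntervalIntegrable g volume a b) :
    expZT Q (fun z τ => g (pValue Q A z.1 z.2 τ)) = ∫ u in (0 : ℝ)..1, g u := by
  rw [← hQ]
  exact sum_mul_integral_comp_randomized_eq_integral Q A hg

theorem intervalIntegrable_ite_lt_pValue (Q A : X × Y → ℝ) (ε : ℝ) (x : X) (y : Y) (a b : ℝ) :
    IntervalIntegrable (fun τ => if ε < pValue Q A x y τ then (1 : ℝ) else 0) volume a b :=
  intervalIntegrable_ite_lt_affine ε _ _ a b

theorem natCast_card_erase_predSet [DecidableEq Y] (Q A : X × Y → ℝ) (ε : ℝ) (x : X) (y : Y)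
    (τ : ℝ) :
    (#((predSet Q A ε x τ).erase y) : ℝ)
      = ∑ y' ∈ univ.erase y, if ε < pValue Q A x y' τ then 1 else 0 := by
  rw [predSet, ← filter_erase, natCast_card_filter]

theorem intervalIntegrable_card_erase_predSet [DecidableEq Y] (Q A : X × Y → ℝ) (ε : ℝ) (x : X)
    (y : Y) (a b : ℝ) :
    IntervalIntegrable (fun τ => (#((predSet Q A ε x τ).erase y) : ℝ)) volume a b := by
  simp only [natCast_card_erase_predSet, ← Finset.sum_fn]
  exact IntervalIntegrable.sum _ fun y' _ => intervalIntegrable_ite_lt_pValue Q A ε x y' a b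

end ConformalExpectation

theorem stmt12_general {X Y : Type*} [Fintype X] [Fintype Y] [DecidableEq Y]
    (Q : X × Y → ℝ)
    (hQ1 : ∑ z : X × Y, Q z = 1) (A : X × Y → ℝ) :
    ∀ ε ∈ Set.Ioo (0:ℝ) 1,
      expXT Q (fun x τ => ((predSet Q A ε x τ).card : ℝ))
          = expZT Q (fun z τ => (((predSet Q A ε z.1 τ).erase z.2).card : ℝ))
            + (1 - ε) ∧
        probZT Q (fun z τ => z.2 ∈ predSet Q A ε z.1 τ) = 1 - ε := by
  rintro ε ⟨hε0, hε1⟩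
  have hcovered : expZT Q (fun z τ => if ε < pValue Q A z.1 z.2 τ then 1 else 0) = 1 - ε := by
    rw [expZT_comp_pValue hQ1 A fun a b => (monotone_ite_lt_one_zero ε).intervalIntegrable,
      integral_ite_lt_one_zero hε0.le hε1.le]
  refine ⟨?_, by simpa [probZT, predSet] using hcovered⟩
  rw [expXT_eq_expZT, ← hcovered, ← expZT_add Q
    (fun z => intervalIntegrable_card_erase_predSet Q A ε z.1 z.2 0 1)
    (fun z => intervalIntegrable_ite_lt_pValue Q A ε z.1 z.2 0 1)]
  congr 1
  funext z τ
  rw [natCast_card_eq_card_erase_add_ite _ z.2]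
  simp only [predSet, mem_filter, mem_univ, true_and]

/-- `E_(x,τ)[|Γ^ε|] = E_((x,y),τ)[|Γ^ε \ {y}|] + (1 − ε)`; equivalently
`Prob_((x,y),τ)(y ∈ Γ^ε(x,τ)) = 1 − ε`. -/
theorem stmt12 {X Y : Type*} [Fintype X] [Fintype Y] [DecidableEq Y] [Nonempty X]
    (hY : 2 ≤ Fintype.card Y) (Q : X × Y → ℝ) (hQ0 : ∀ z, 0 ≤ Q z)
    (hQ1 : ∑ z : X × Y, Q z = 1) (hQX : ∀ x, 0 < margX Q x) (A : X × Y → ℝ) :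
    ∀ ε ∈ Set.Ioo (0:ℝ) 1,
      expXT Q (fun x τ => ((predSet Q A ε x τ).card : ℝ))
          = expZT Q (fun z τ => (((predSet Q A ε z.1 τ).erase z.2).card : ℝ))
            + (1 - ε) ∧
        probZT Q (fun z τ => z.2 ∈ predSet Q A ε z.1 τ) = 1 - ε :=
  stmt12_general Q hQ1 A
end

section
/- For every idealised conformity measure A: E_{x,τ}[min_y max_{y'≠y} p_A(x,y',τ)] = ∫_0^1 Prob_{x,τ}(|Γ_A^ε(x,τ)| > 1) dε. -/
/-!
The quantity `min_y max_{y' ≠ y} p(y')` is the second largest value of `p`, so it exceeds `ε`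
exactly when at least two labels have p-value above `ε`, i.e. when `|Γ^ε| > 1`. The right-hand
side is therefore `∫₀¹ E[1{ε < u(x,τ)}] dε` with `u` the unconfidence, and since `u` takes values
in `[0,1]` the layer-cake formula turns this into `E[u]`.
-/

open Finset MeasureTheory

section SecondMax

variable {Y : Type*} [Fintype Y]

noncomputable def secondMax (p : Y → ℝ) : ℝ := ⨅ y, ⨆ y' : {y' : Y // y' ≠ y}, p y'

theorem secondMax_mono {p q : Y → ℝ} (h : ∀ y, p y ≤ q y) : secondMax p ≤ secondMax q :=
  ciInf_mono (Set.finite_range _).bddBelow fun _ =>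
    ciSup_mono (Set.finite_range _).bddAbove fun y' => h y'

variable [Nontrivial Y]

theorem le_secondMax {p : Y → ℝ} {a : ℝ} (h : ∀ y, a ≤ p y) : a ≤ secondMax p :=
  le_ciInf fun y => by
    obtain ⟨y', hy'⟩ := exists_ne y
    exact le_ciSup_of_le (Set.finite_range _).bddAbove ⟨y', hy'⟩ (h y')

theorem secondMax_le {p : Y → ℝ} {b : ℝ} (h : ∀ y, p y ≤ b) : secondMax p ≤ b := by
  obtain ⟨y, y', hne⟩ := exists_pair_ne Y
  have : Nonempty {y'' : Y // y'' ≠ y} := ⟨⟨y', hne.symm⟩⟩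
  exact ciInf_le_of_le (Set.finite_range _).bddBelow y (ciSup_le fun y'' => h y'')

theorem one_lt_card_filter_lt_iff_lt_secondMax (p : Y → ℝ) (ε : ℝ) :
    1 < #{y | ε < p y} ↔ ε < secondMax p := by
  rw [one_lt_card]
  constructor
  · rintro ⟨y₁, h₁, y₂, h₂, hne⟩
    simp only [mem_filter, mem_univ, true_and] at h₁ h₂
    refine (lt_min h₁ h₂).trans_le (le_ciInf fun y => ?_)
    have hle : ∀ y' (hy' : y' ≠ y), p y' ≤ ⨆ y' : {y' : Y // y' ≠ y}, p y' := fun y' hy' =>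
      le_ciSup (f := fun y' : {y' : Y // y' ≠ y} => p y') (Set.finite_range _).bddAbove ⟨y', hy'⟩
    by_cases hy : y₁ = y
    · exact (min_le_right _ _).trans (hle y₂ (hy ▸ hne.symm))
    · exact (min_le_left _ _).trans (hle y₁ hy)
  · intro h
    have hother : ∀ y, ∃ y' ≠ y, ε < p y' := fun y => by
      have : Nonempty {y' : Y // y' ≠ y} := nonempty_subtype.mpr (exists_ne y)
      obtain ⟨⟨y', hy'⟩, hlt⟩ :=
        exists_lt_of_lt_ciSup (h.trans_le (ciInf_le (Set.finite_range _).bddBelow y))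
      exact ⟨y', hy', hlt⟩
    obtain ⟨y₁, -, h₁⟩ := hother (Classical.arbitrary Y)
    obtain ⟨y₂, hne, h₂⟩ := hother y₁
    exact ⟨y₁, by simpa using h₁, y₂, by simpa using h₂, hne.symm⟩

end SecondMax

section LayerCake

open Set

variable {u : ℝ → ℝ}

theorem intervalIntegral_ite_lt_eq_measureReal (hu : Measurable u) (ε : ℝ) :
    ∫ τ in (0:ℝ)..1, (if ε < u τ then 1 else 0 : ℝ)
      = (volume.restrict (Ioc (0:ℝ) 1)).real {τ | ε < u τ} := by
  rw [intervalIntegral.integral_of_le zero_le_one,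
    ← integral_indicator_one (measurableSet_lt measurable_const hu)]
  rfl

theorem antitone_intervalIntegral_ite_lt (hu : Measurable u) :
    Antitone fun ε => ∫ τ in (0:ℝ)..1, (if ε < u τ then 1 else 0 : ℝ) := fun ε ε' h => by
  simp only [intervalIntegral_ite_lt_eq_measureReal hu]
  exact measureReal_mono fun τ hτ => lt_of_le_of_lt h hτ

theorem intervalIntegral_eq_intervalIntegral_ite_lt (hu : Measurable u)
    (hu01 : ∀ τ ∈ Ioc (0:ℝ) 1, u τ ∈ Set.Icc 0 1) :
    ∫ τ in (0:ℝ)..1, u τ = ∫ ε in (0:ℝ)..1, ∫ τ in (0:ℝ)..1, if ε < u τ then 1 else 0 := by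
  have hint : Integrable u (volume.restrict (Ioc 0 1)) :=
    .of_mem_Icc 0 1 hu.aemeasurable (ae_restrict_of_forall_mem measurableSet_Ioc hu01)
  have hvanish : ∀ ε ∈ Ioi (0:ℝ) \ Ioc 0 1,
      (volume.restrict (Ioc (0:ℝ) 1)).real {τ | ε < u τ} = 0 := by
    rintro ε ⟨hε0, hε⟩
    have hε1 : 1 < ε := lt_of_not_ge fun h => hε ⟨hε0, h⟩
    have hempty : {τ | ε < u τ} ∩ Ioc 0 1 = ∅ :=
      eq_empty_of_forall_notMem fun τ ⟨hlt, hτ⟩ => (hu01 τ hτ).2.not_gt (hε1.trans hlt)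
    rw [measureReal_restrict_apply (measurableSet_lt measurable_const hu), hempty,
      measureReal_empty]
  rw [intervalIntegral.integral_of_le zero_le_one, intervalIntegral.integral_of_le zero_le_one,
    hint.integral_eq_integral_meas_lt
      (ae_restrict_of_forall_mem measurableSet_Ioc fun τ hτ => (hu01 τ hτ).1),
    setIntegral_eq_of_subset_of_forall_sdiff_eq_zero measurableSet_Ioi Ioc_subset_Ioi_self hvanish]
  simp only [intervalIntegral_ite_lt_eq_measureReal hu]

end LayerCake

section Conformal

variable {X Y : Type*} [Fintype X] [Fintype Y] {Q : X × Y → ℝ} (A : X × Y → ℝ) (x : X)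

theorem pValue_monotone (hQ0 : ∀ z, 0 ≤ Q z) (y : Y) : Monotone (pValue Q A x y) :=
  fun _ _ h => add_le_add_right
    (mul_le_mul_of_nonneg_right h (sum_nonneg fun z _ => ite_nonneg (hQ0 z) le_rfl)) _

theorem pValue_nonneg (hQ0 : ∀ z, 0 ≤ Q z) (y : Y) {τ : ℝ} (hτ : 0 ≤ τ) :
    0 ≤ pValue Q A x y τ :=
  add_nonneg (sum_nonneg fun z _ => ite_nonneg (hQ0 z) le_rfl)
    (mul_nonneg hτ (sum_nonneg fun z _ => ite_nonneg (hQ0 z) le_rfl))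

theorem pValue_le_one (hQ0 : ∀ z, 0 ≤ Q z) (hQ1 : ∑ z, Q z = 1) (y : Y) {τ : ℝ} (hτ : τ ≤ 1) :
    pValue Q A x y τ ≤ 1 := calc
  pValue Q A x y τ ≤ pValue Q A x y 1 := pValue_monotone A x hQ0 y hτ
  _ = ∑ z, ((if A z < A (x, y) then Q z else 0) + if A z = A (x, y) then Q z else 0) := by
    rw [pValue, one_mul, sum_add_distrib]
  _ ≤ ∑ z, Q z := sum_le_sum fun z _ => by
    split_ifs with hlt heq
    exacts [absurd heq hlt.ne, by simp, by simp, by simpa using hQ0 z]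
  _ = 1 := hQ1

theorem unconf_eq_secondMax (τ : ℝ) : unconf Q A x τ = secondMax fun y => pValue Q A x y τ :=
  rfl

theorem unconf_monotone (hQ0 : ∀ z, 0 ≤ Q z) : Monotone (unconf Q A x) := fun _ _ h => by
  simp only [unconf_eq_secondMax]
  exact secondMax_mono fun y => pValue_monotone A x hQ0 y h

variable [Nontrivial Y]

theorem unconf_mem_Icc (hQ0 : ∀ z, 0 ≤ Q z) (hQ1 : ∑ z, Q z = 1) {τ : ℝ}
    (hτ : τ ∈ Set.Icc 0 1) : unconf Q A x τ ∈ Set.Icc 0 1 := by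
  rw [unconf_eq_secondMax]
  exact ⟨le_secondMax fun y => pValue_nonneg A x hQ0 y hτ.1,
    secondMax_le fun y => pValue_le_one A x hQ0 hQ1 y hτ.2⟩

theorem one_lt_card_predSet_iff (ε τ : ℝ) :
    1 < #(predSet Q A ε x τ) ↔ ε < unconf Q A x τ := by
  rw [unconf_eq_secondMax]
  exact one_lt_card_filter_lt_iff_lt_secondMax _ ε

end Conformal

theorem stmt13_general {X Y : Type*} [Fintype X] [Fintype Y]
    (hY : 2 ≤ Fintype.card Y) (Q : X × Y → ℝ) (hQ0 : ∀ z, 0 ≤ Q z)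
    (hQ1 : ∑ z : X × Y, Q z = 1) (A : X × Y → ℝ) :
    expXT Q (unconf Q A)
      = ∫ ε in (0:ℝ)..1, probXT Q (fun x τ => 1 < (predSet Q A ε x τ).card) := by
  have : Nontrivial Y := Fintype.one_lt_card_iff_nontrivial.mp hY
  have hmeas x : Measurable (unconf Q A x) := (unconf_monotone A x hQ0).measurable
  simp only [probXT, expXT, one_lt_card_predSet_iff]
  rw [intervalIntegral.integral_finsetSum fun x _ =>
    ((antitone_intervalIntegral_ite_lt (hmeas x)).intervalIntegrable).const_mul _]
  refine sum_congr rfl fun x _ => ?_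
  rw [intervalIntegral.integral_const_mul, intervalIntegral_eq_intervalIntegral_ite_lt (hmeas x)
    fun τ hτ => unconf_mem_Icc A x hQ0 hQ1 (Set.Ioc_subset_Icc_self hτ)]

/-- `E_(x,τ)[min_y max_(y'≠y) p_A(x,y',τ)] = ∫_0^1 Prob(|Γ^ε| > 1) dε`. -/
theorem stmt13 {X Y : Type*} [Fintype X] [Fintype Y] [DecidableEq Y] [Nonempty X]
    (hY : 2 ≤ Fintype.card Y) (Q : X × Y → ℝ) (hQ0 : ∀ z, 0 ≤ Q z)
    (hQ1 : ∑ z : X × Y, Q z = 1) (hQX : ∀ x, 0 < margX Q x) (A : X × Y → ℝ) :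
    expXT Q (unconf Q A)
      = ∫ ε in (0:ℝ)..1, probXT Q (fun x τ => 1 < (predSet Q A ε x τ).card) :=
  stmt13_general hY Q hQ0 hQ1 A
end

section
/- For every idealised conformity measure A: E_{x,τ}[Σ_{y∈Y} p_A(x,y,τ) − max_y p_A(x,y,τ)] = ∫_0^1 E_{x,τ}[(|Γ_A^ε(x,τ)| − 1)^+] dε. -/
/-! For fixed `x` and `τ` the p-values `p y` lie in `[0, 1]`, and the prediction set at level
`ε` is nonempty exactly when `ε < max_y p y`, so
`(|Γ^ε| - 1)⁺ = ∑_y 𝟙[ε < p y] - 𝟙[ε < max_y p y]`.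
Integrating over `ε ∈ [0, 1]` turns this into `∑_y p y - max_y p y`. The integrand is bounded
by `|Y|`, so Fubini lets the `ε`- and `τ`-integrals be exchanged, and the finite sum over `x`
commutes with the `ε`-integral. -/

open MeasureTheory Finset

section LayerCake

variable {ι : Type*} [Fintype ι]

lemma antitone_ite_lt (c : ℝ) : Antitone fun ε : ℝ => if ε < c then (1:ℝ) else 0 := by
  intro a b hab
  by_cases hb : b < c
  · simp [hb, hab.trans_lt hb]
  · simp only [hb, if_false]; split_ifs <;> norm_num

lemma intervalIntegral_ite_lt_eq {c : ℝ} (h0 : 0 ≤ c) (h1 : c ≤ 1) :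
    ∫ ε in (0:ℝ)..1, (if ε < c then (1:ℝ) else 0) = c := by
  have hind : (fun ε : ℝ => if ε < c then (1:ℝ) else 0) = (Set.Iio c).indicator 1 := by
    ext ε; simp [Set.indicator_apply]
  have hinter : Set.Iio c ∩ Set.Ioc (0:ℝ) 1 = Set.Ioo 0 c := by
    ext ε
    exact ⟨fun h => ⟨h.2.1, h.1⟩, fun h => ⟨h.2, h.1, by linarith [h.2]⟩⟩
  rw [intervalIntegral.integral_of_le zero_le_one, hind, integral_indicator_one measurableSet_Iio,
    measureReal_restrict_apply measurableSet_Iio, hinter, Real.volume_real_Ioo_of_le h0, sub_zero]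

lemma max_card_filter_lt_sub_one_eq [Nonempty ι] (p : ι → ℝ) (ε : ℝ) :
    max ((#{i | ε < p i} : ℝ) - 1) 0
      = ∑ i, (if ε < p i then (1:ℝ) else 0) - if ε < ⨆ i, p i then 1 else 0 := by
  rw [natCast_card_filter]
  by_cases hε : ε < ⨆ i, p i
  · obtain ⟨i, hi⟩ := exists_lt_of_lt_ciSup hε
    have hone : (1:ℝ) ≤ ∑ j, if ε < p j then (1:ℝ) else 0 :=
      (if_pos hi).symm.le.trans
        (single_le_sum (f := fun j => if ε < p j then (1:ℝ) else 0) (fun j _ => by positivity)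
          (mem_univ i))
    rw [if_pos hε, max_eq_left (by linarith)]
  · have hle : ∀ i, ¬ ε < p i := fun i hi =>
      hε (hi.trans_le (le_ciSup (Set.finite_range p).bddAbove i))
    simp [hε, hle]

theorem intervalIntegral_max_card_filter_lt_sub_one [Nonempty ι] {p : ι → ℝ}
    (h0 : ∀ i, 0 ≤ p i) (h1 : ∀ i, p i ≤ 1) :
    ∫ ε in (0:ℝ)..1, max ((#{i | ε < p i} : ℝ) - 1) 0 = ∑ i, p i - ⨆ i, p i := by
  obtain ⟨i₀, hi₀⟩ : ∃ i, p i = ⨆ i, p i := exists_eq_ciSup_of_finite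
  have hint (c : ℝ) := (antitone_ite_lt c).intervalIntegrable (μ := volume) (a := 0) (b := 1)
  have hsum : IntervalIntegrable (fun ε => ∑ i, if ε < p i then (1:ℝ) else 0) volume 0 1 := by
    simpa only [Finset.sum_fn] using IntervalIntegrable.sum univ fun i _ => hint (p i)
  simp_rw [max_card_filter_lt_sub_one_eq p]
  rw [intervalIntegral.integral_sub hsum (hint _),
    intervalIntegral.integral_finsetSum fun i _ => hint (p i),
    intervalIntegral_ite_lt_eq (hi₀ ▸ h0 i₀) (hi₀ ▸ h1 i₀)]
  simp_rw [intervalIntegral_ite_lt_eq (h0 _) (h1 _)]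

end LayerCake

section Excess

variable {ι : Type*} [Fintype ι] {p : ι → ℝ → ℝ}

/-- `(|Γ^ε(τ)| - 1)⁺` for the prediction set `Γ^ε(τ) = {i | ε < p i τ}` of a family of
p-values `p`. -/
noncomputable def excess (p : ι → ℝ → ℝ) (ε τ : ℝ) : ℝ := max ((#{i | ε < p i τ} : ℝ) - 1) 0

lemma measurable_excess (hp : ∀ i, Measurable (p i)) :
    Measurable (Function.uncurry (excess p)) := by
  have hcard : Measurable fun q : ℝ × ℝ => (#{i | q.1 < p i q.2} : ℝ) := by
    simp_rw [natCast_card_filter]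
    exact Finset.measurable_sum _ fun i _ =>
      Measurable.ite (measurableSet_lt measurable_fst ((hp i).comp measurable_snd))
        measurable_const measurable_const
  exact (hcard.sub_const 1).max measurable_const

lemma excess_le_card (ε τ : ℝ) : excess p ε τ ≤ Fintype.card ι := by
  have hcard : (#{i | ε < p i τ} : ℝ) ≤ Fintype.card ι := by
    exact_mod_cast (card_filter_le _ _).trans_eq card_univ
  exact max_le (by linarith) (Nat.cast_nonneg _)

lemma integrable_excess (hp : ∀ i, Measurable (p i)) (μ : Measure (ℝ × ℝ))
    [IsFiniteMeasure μ] : Integrable (Function.uncurry (excess p)) μ := by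
  refine .of_bound (measurable_excess hp).aestronglyMeasurable (Fintype.card ι)
    (ae_of_all _ fun q => ?_)
  rw [Real.norm_eq_abs, abs_of_nonneg (le_max_right _ _)]
  exact excess_le_card q.1 q.2

lemma integrableOn_excess_unitSquare (hp : ∀ i, Measurable (p i)) :
    IntegrableOn (Function.uncurry (excess p)) (Set.uIoc 0 1 ×ˢ Set.uIoc 0 1) := by
  rw [IntegrableOn, Set.uIoc_of_le zero_le_one, Measure.volume_eq_prod, ← Measure.prod_restrict]
  exact integrable_excess hp _

theorem intervalIntegral_sum_sub_iSup_eq_intervalIntegral_excess [Nonempty ι]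
    (hp : ∀ i, Measurable (p i))
    (hp01 : ∀ i, ∀ τ ∈ Set.Icc (0:ℝ) 1, p i τ ∈ Set.Icc 0 1) :
    ∫ τ in (0:ℝ)..1, (∑ i, p i τ - ⨆ i, p i τ)
      = ∫ ε in (0:ℝ)..1, ∫ τ in (0:ℝ)..1, excess p ε τ := by
  calc ∫ τ in (0:ℝ)..1, (∑ i, p i τ - ⨆ i, p i τ)
      = ∫ τ in (0:ℝ)..1, ∫ ε in (0:ℝ)..1, excess p ε τ := by
        refine intervalIntegral.integral_congr fun τ hτ => ?_
        rw [Set.uIcc_of_le zero_le_one] at hτ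
        exact (intervalIntegral_max_card_filter_lt_sub_one (fun i => (hp01 i τ hτ).1)
          fun i => (hp01 i τ hτ).2).symm
    _ = _ := (intervalIntegral_intervalIntegral_swap
        (integrableOn_excess_unitSquare hp)).symm

lemma intervalIntegrable_intervalIntegral_excess (hp : ∀ i, Measurable (p i)) :
    IntervalIntegrable (fun ε => ∫ τ in (0:ℝ)..1, excess p ε τ) volume 0 1 := by
  rw [intervalIntegrable_iff_integrableOn_Ioc_of_le zero_le_one]
  simp only [intervalIntegral.integral_of_le zero_le_one]
  exact (integrable_excess hp _).integral_prod_left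

end Excess

section PValue

variable {X Y : Type*} [Fintype X] [Fintype Y] {Q : X × Y → ℝ}

lemma measurable_pValue (A : X × Y → ℝ) (x : X) (y : Y) : Measurable (pValue Q A x y) := by
  unfold pValue
  fun_prop

lemma pValue_mem_Icc (hQ0 : ∀ z, 0 ≤ Q z) (hQ1 : ∑ z, Q z = 1) (A : X × Y → ℝ) (x : X) (y : Y)
    {τ : ℝ} (hτ : τ ∈ Set.Icc (0:ℝ) 1) : pValue Q A x y τ ∈ Set.Icc 0 1 := by
  set a := A (x, y)
  have hlt : 0 ≤ ∑ z, if A z < a then Q z else 0 :=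
    sum_nonneg fun z _ => ite_nonneg (hQ0 z) le_rfl
  have heq : 0 ≤ ∑ z, if A z = a then Q z else 0 :=
    sum_nonneg fun z _ => ite_nonneg (hQ0 z) le_rfl
  have htot :
      (∑ z, if A z < a then Q z else 0) + (∑ z, if A z = a then Q z else 0) ≤ 1 := by
    rw [← sum_add_distrib, ← hQ1]
    exact sum_le_sum fun z _ => by split_ifs <;> linarith [hQ0 z]
  unfold pValue
  constructor <;> nlinarith [hτ.1, hτ.2]

end PValue

theorem stmt15_general {X Y : Type*} [Fintype X] [Fintype Y]
    (hY : 2 ≤ Fintype.card Y) (Q : X × Y → ℝ) (hQ0 : ∀ z, 0 ≤ Q z)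
    (hQ1 : ∑ z : X × Y, Q z = 1) (A : X × Y → ℝ) :
    expXT Q (fun x τ => (∑ y, pValue Q A x y τ) - maxPV Q A x τ)
      = ∫ ε in (0:ℝ)..1,
          expXT Q (fun x τ => max (((predSet Q A ε x τ).card : ℝ) - 1) 0) := by
  have : Nonempty Y := Fintype.card_pos_iff.mp (by omega)
  change ∑ x, margX Q x * ∫ τ in (0:ℝ)..1, (∑ y, pValue Q A x y τ - ⨆ y, pValue Q A x y τ)
    = ∫ ε in (0:ℝ)..1, ∑ x, margX Q x * ∫ τ in (0:ℝ)..1, excess (pValue Q A x) ε τ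
  rw [intervalIntegral.integral_finsetSum fun x _ =>
    (intervalIntegrable_intervalIntegral_excess (measurable_pValue A x)).const_mul _]
  refine sum_congr rfl fun x _ => ?_
  rw [intervalIntegral.integral_const_mul,
    intervalIntegral_sum_sub_iSup_eq_intervalIntegral_excess (measurable_pValue A x)
      fun y τ hτ => pValue_mem_Icc hQ0 hQ1 A x y hτ]

/-- `E_(x,τ)[Σ_y p_A − max_y p_A] = ∫_0^1 E_(x,τ)[(|Γ^ε| − 1)⁺] dε`. -/
theorem stmt15 {X Y : Type*} [Fintype X] [Fintype Y] [DecidableEq Y] [Nonempty X]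
    (hY : 2 ≤ Fintype.card Y) (Q : X × Y → ℝ) (hQ0 : ∀ z, 0 ≤ Q z)
    (hQ1 : ∑ z : X × Y, Q z = 1) (hQX : ∀ x, 0 < margX Q x) (A : X × Y → ℝ) :
    expXT Q (fun x τ => (∑ y, pValue Q A x y τ) - maxPV Q A x τ)
      = ∫ ε in (0:ℝ)..1,
          expXT Q (fun x τ => max (((predSet Q A ε x τ).card : ℝ) - 1) 0) :=
  stmt15_general hY Q hQ0 hQ1 A
end
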